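/- arXiv:2107.01532 — 7 statements merged into one kernel-verified Lean document; each statement's English description precedes it below -/
import Mathlib

section
/- For every real number k with 1575/32768 < k < 1764/32768, k/16 + ((524288k − 14175)·√(524288k − 14175) − 358425)/226492416 − ((131072k − 3087)·√(131072k − 3087))/28311552 > 0. (This is the strict positivity of the welfare difference between the learning sequence X1-then-X2 and the sequence X2-then-X1 when there is no early offer, used in the proof of part (i) of the lemma on optimal learning sequences.) -/
/-!
Put `u = √(131072 k - 3087)`. Then `524288 k - 14175 = 4 u² - 1827`, and after multiplying by
`226492416` the welfare difference becomes `(4 u² - 1827)^{3/2} - (8 u³ - 108 u² + 25029)`.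
The hypothesis on `k` gives `u ≥ 56`, and squaring reduces the claim to the positivity of a quintic
in `u` whose expansion in powers of `u - 56` has only positive coefficients.
-/

lemma lt_mul_sqrt_self_of_sq_lt_pow_three {a b : ℝ} (hb : 0 ≤ b) (h : a ^ 2 < b ^ 3) :
    a < b * √b :=
  calc a ≤ |a| := le_abs_self a
    _ = √(a ^ 2) := (Real.sqrt_sq_eq_abs a).symm
    _ < √(b ^ 3) := Real.sqrt_lt_sqrt (sq_nonneg a) h
    _ = b * √b := by rw [pow_succ, Real.sqrt_mul' _ hb, Real.sqrt_sq hb]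

lemma sq_cubic_lt_pow_three_of_le {u : ℝ} (hu : 56 ≤ u) :
    (8 * u ^ 3 - 108 * u ^ 2 + 25029) ^ 2 < (4 * u ^ 2 - 1827) ^ 3 := by
  obtain ⟨t, ht, rfl⟩ : ∃ t, 0 ≤ t ∧ u = t + 56 := ⟨u - 56, by linarith, by ring⟩
  have expand : (4 * (t + 56) ^ 2 - 1827) ^ 3 - (8 * (t + 56) ^ 3 - 108 * (t + 56) ^ 2 + 25029) ^ 2
      = 1728 * t ^ 5 + 384480 * t ^ 4 + 31532976 * t ^ 3 + 1143270180 * t ^ 2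
        + 16497335232 * t + 40023241452 := by ring
  have : 0 < 1728 * t ^ 5 + 384480 * t ^ 4 + 31532976 * t ^ 3 + 1143270180 * t ^ 2
      + 16497335232 * t + 40023241452 := by positivity
  linarith

lemma cubic_lt_mul_sqrt_of_le {u : ℝ} (hu : 56 ≤ u) :
    8 * u ^ 3 - 108 * u ^ 2 + 25029 < (4 * u ^ 2 - 1827) * √(4 * u ^ 2 - 1827) :=
  lt_mul_sqrt_self_of_sq_lt_pow_three (by nlinarith) (sq_cubic_lt_pow_three_of_le hu)

theorem welfare_diff_X1X2_vs_X2X1_no_early_offer_general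
    (k : ℝ) (hk : 1575/32768 < k) :
    k/16 + ((524288*k - 14175) * Real.sqrt (524288*k - 14175) - 358425) / 226492416
      - ((131072*k - 3087) * Real.sqrt (131072*k - 3087)) / 28311552 > 0 := by
  obtain ⟨u, hu_def⟩ : ∃ u, u = √(131072 * k - 3087) := ⟨_, rfl⟩
  have hu_sq : u ^ 2 = 131072 * k - 3087 := hu_def ▸ Real.sq_sqrt (by linarith)
  have hu : 56 ≤ u := hu_def ▸ (Real.le_sqrt (by norm_num) (by linarith)).2 (by linarith)
  have hs : 524288 * k - 14175 = 4 * u ^ 2 - 1827 := by linarith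
  have hcube : (131072 * k - 3087) * √(131072 * k - 3087) = u ^ 3 := by
    rw [← hu_def, ← hu_sq]; ring
  rw [hs, hcube]
  linarith [cubic_lt_mul_sqrt_of_le hu]

theorem welfare_diff_X1X2_vs_X2X1_no_early_offer
    (k : ℝ) (hk : 1575/32768 < k) (hk' : k < 1764/32768) :
    k/16 + ((524288*k - 14175) * Real.sqrt (524288*k - 14175) - 358425) / 226492416
      - ((131072*k - 3087) * Real.sqrt (131072*k - 3087)) / 28311552 > 0 :=
  welfare_diff_X1X2_vs_X2X1_no_early_offer_general k hk
end

section
/- For every real number k with 1575/32768 < k < 1764/32768, k/16 + (8k·√(2k))/9 − ((8192k − 343)·√(8192k − 343))/589824 − 1375/1048576 > 0. (This is the strict positivity of the welfare difference between the learning sequence X1-then-X2 and X2-then-X1 when there is a single early offer from university 1, used in the proof of part (ii) of the lemma on optimal learning sequences.) -/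
/-!
On the admissible interval `√(2k) ≥ 31/100`, while `0 < 8192k - 343 < 98 ≤ 10²`, so the
cubic term `(8192k - 343)^(3/2)` is at most `10 (8192k - 343)`. Replacing both square roots by
these constants leaves an expression linear in `k`, positive already at `k = 1575/32768`.
-/

lemma mul_sqrt_le_mul_of_le_sq {x c : ℝ} (hx : 0 ≤ x) (hc : 0 ≤ c) (hxc : x ≤ c ^ 2) :
    x * √x ≤ x * c :=
  mul_le_mul_of_nonneg_left (Real.sqrt_le_iff.mpr ⟨hc, hxc⟩) hx

theorem welfare_diff_X1X2_vs_X2X1_early_offer_from_1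
    (k : ℝ) (hk : 1575/32768 < k) (hk' : k < 1764/32768) :
    k/16 + (8*k * Real.sqrt (2*k)) / 9
      - ((8192*k - 343) * Real.sqrt (8192*k - 343)) / 589824
      - 1375/1048576 > 0 := by
  have hsqrt : 31/100 ≤ √(2*k) := Real.le_sqrt_of_sq_le (by linarith)
  have hgain : 8*k * (31/100) ≤ 8*k * √(2*k) := mul_le_mul_of_nonneg_left hsqrt (by linarith)
  have hloss : (8192*k - 343) * √(8192*k - 343) ≤ (8192*k - 343) * 10 :=
    mul_sqrt_le_mul_of_le_sq (by linarith) (by norm_num) (by linarith)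
  linarith
end

section
/- For every real number k with 1575/32768 < k < 1764/32768, (8k·√(2k))/9 − k/16 − ((32768k − 1575)·√(32768k − 1575))/4718592 + 789/524288 > 0. (This is the strict positivity of the welfare difference between the learning sequence X2-then-X1 and X1-then-X2 when there is a single early offer from university 2, used in the proof of part (iii) of the lemma on optimal learning sequences.) -/
theorem welfare_diff_X2X1_vs_X1X2_early_offer_from_2
    (k : ℝ) (hk : 1575/32768 < k) (hk' : k < 1764/32768) :
    (8*k * Real.sqrt (2*k)) / 9 - k/16
      - ((32768*k - 1575) * Real.sqrt (32768*k - 1575)) / 4718592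
      + 789/524288 > 0 := by
  have hs : 39/128 ≤ Real.sqrt (2*k) := Real.le_sqrt_of_sq_le (by linarith)
  have ht : Real.sqrt (32768*k - 1575) ≤ 14 := Real.sqrt_le_iff.2 ⟨by norm_num, by linarith⟩
  calc (0:ℝ) < 8*k * (39/128) / 9 - k/16 - ((32768*k - 1575) * 14) / 4718592 + 789/524288 := by
        linarith
    _ ≤ _ := by gcongr; linarith
end

section
/- For every real number k with 1575/32768 < k < 1764/32768, (8k·√(2k))/9 − (k·√(524288k − 14175))/288 + ((524288k − 14175)^(3/2))/254803968 > 0. (This is the strict welfare dominance of the Hybrid mechanism over the DA conditional on a single early offer from university 1, from the proof of the lemma on welfare comparisons.) -/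
/-!
Put `u = 524288 k - 14175`. Since `u ^ (3/2) = u √u`, the expression is `A - B` with
`A = 8 k √(2k) / 9 > 0` and `B = √u (k/288 - u/254803968)`, and `A² - B²` is a polynomial in `k`
which factors as a positive multiple of `(32768 k - 2025)² (131072 k + 2835)`. Hence `B < A`
whenever `u ≥ 0` and `k ≠ 2025/32768`, the double root lying just above the admissible interval.
-/

open Real

lemma Real.rpow_three_halves_eq_mul_sqrt {x : ℝ} (hx : 0 ≤ x) : x ^ (3 / 2 : ℝ) = x * √x := by
  rw [sqrt_eq_rpow, ← rpow_one_add' hx (by norm_num)]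
  norm_num

lemma welfare_gap_sq_sub_sq {k : ℝ} (hu : 0 ≤ 524288 * k - 14175) :
    (8 * k * √(2 * k) / 9) ^ 2
        - (√(524288 * k - 14175) * (k / 288 - (524288 * k - 14175) / 254803968)) ^ 2
      = 245 * (32768 * k - 2025) ^ 2 * (131072 * k + 2835) / 64925062108545024 := by
  rw [div_pow, mul_pow, mul_pow, mul_pow, sq_sqrt (by linarith), sq_sqrt hu]
  ring

theorem welfare_gap_pos {k : ℝ} (hk : 14175 / 524288 ≤ k) (hk_root : k ≠ 2025 / 32768) :
    0 < 8 * k * √(2 * k) / 9 - k * √(524288 * k - 14175) / 288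
      + (524288 * k - 14175) ^ (3 / 2 : ℝ) / 254803968 := by
  have hu : 0 ≤ 524288 * k - 14175 := by linarith
  set B := √(524288 * k - 14175) * (k / 288 - (524288 * k - 14175) / 254803968)
  have hA : 0 < 8 * k * √(2 * k) / 9 := by
    have : 0 < k := by linarith
    positivity
  have hsq : B ^ 2 < (8 * k * √(2 * k) / 9) ^ 2 := by
    rw [← sub_pos, welfare_gap_sq_sub_sq hu]
    have : 32768 * k - 2025 ≠ 0 := fun h => hk_root (by linarith)
    have : 0 < 131072 * k + 2835 := by linarith
    positivity
  have hB : B < 8 * k * √(2 * k) / 9 := (abs_lt_of_sq_lt_sq' hsq hA.le).2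
  rw [rpow_three_halves_eq_mul_sqrt hu]
  simp only [B] at hB
  linarith

theorem hybrid_dominates_DA_early_offer_from_1
    (k : ℝ) (hk : 1575/32768 < k) (hk' : k < 1764/32768) :
    (8*k * Real.sqrt (2*k)) / 9 - (k * Real.sqrt (524288*k - 14175)) / 288
      + (524288*k - 14175) ^ ((3:ℝ)/2) / 254803968 > 0 :=
  welfare_gap_pos (by linarith) (by linarith)
end

section
/- For every real number k with 1575/32768 < k < 1764/32768, (8k·√(2k))/9 − k/16 + 789/524288 − (11k·√(524288k − 14175))/7776 + (175·√(524288k − 14175))/1572864 > 0. (This is the strict welfare dominance of the Hybrid mechanism over the DA conditional on a single early offer from university 2, from the proof of the lemma on welfare comparisons.) -/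
/-! On the admissible range the coefficient `175/1572864 - 11k/7776` of `√(524288k - 14175)` is
nonnegative, so that term can be dropped; and `k > 1/32` gives `√(2k) ≥ 1/4`, so
`8k√(2k)/9 ≥ 2k/9` already outweighs `k/16`. -/

lemma one_quarter_le_sqrt_two_mul {k : ℝ} (hk : 1/32 ≤ k) : 1/4 ≤ Real.sqrt (2*k) :=
  Real.le_sqrt_of_sq_le (by linarith)

theorem hybrid_dominates_DA_early_offer_from_2
    (k : ℝ) (hk : 1575/32768 < k) (hk' : k < 1764/32768) :
    (8*k * Real.sqrt (2*k)) / 9 - k/16 + 789/524288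
      - (11*k * Real.sqrt (524288*k - 14175)) / 7776
      + (175 * Real.sqrt (524288*k - 14175)) / 1572864 > 0 := by
  have hk_pos : 0 < k := by linarith
  have h_sqrt_term : 0 ≤ Real.sqrt (524288*k - 14175) * (175/1572864 - 11*k/7776) :=
    mul_nonneg (Real.sqrt_nonneg _) (by linarith)
  have h_main_term : k * (1/4) ≤ k * Real.sqrt (2*k) :=
    mul_le_mul_of_nonneg_left (one_quarter_le_sqrt_two_mul (by linarith)) hk_pos.le
  linarith
end

section
/- For every real number k with 1575/32768 < k < 1764/32768, (2k·√(2k))/3 − (k·√(524288k − 14175))/288 + ((524288k − 14175)^(3/2))/143327232 > 0. (This is the strict welfare dominance of the Hybrid mechanism over the DA conditional on two early offers, in either arrival order, from the proof of the lemma on welfare comparisons.) -/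
/-!
Put `a = √(2k)`, `b = √(524288k - 14175)` and `c = 288a`, so that `k = a²/2`. Since
`143327232 = 3·2·288³`, the expression equals `(b³ + 2c³ - 3c²b) / 143327232 = (b - c)²(b + 2c) / 143327232`,
which is positive by three-term AM-GM as soon as `b ≠ c`. Squaring, `b = c` would force
`524288k - 14175 = 165888k`, i.e. `k = 14175/358400 < 1575/32768`.
-/

open Real

theorem three_mul_sq_mul_lt_pow_three_add {x c : ℝ} (hx : 0 ≤ x) (hc : 0 < c) (hxc : x ≠ c) :
    3 * c ^ 2 * x < x ^ 3 + 2 * c ^ 3 := by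
  have hfactor : x ^ 3 + 2 * c ^ 3 - 3 * c ^ 2 * x = (x - c) ^ 2 * (x + 2 * c) := by ring
  have hpos : 0 < (x - c) ^ 2 * (x + 2 * c) :=
    mul_pos (sq_pos_of_ne_zero (sub_ne_zero.mpr hxc)) (by linarith)
  linarith

theorem rpow_three_halves_eq_sqrt_pow {y : ℝ} (hy : 0 ≤ y) : y ^ ((3 : ℝ) / 2) = √y ^ 3 := by
  rw [rpow_div_two_eq_sqrt _ hy]
  exact_mod_cast rpow_natCast (√y) 3

theorem hybrid_dominates_DA_two_early_offers_general
    (k : ℝ) (hk : 1575/32768 < k) :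
    (2*k * Real.sqrt (2*k)) / 3 - (k * Real.sqrt (524288*k - 14175)) / 288
      + (524288*k - 14175) ^ ((3:ℝ)/2) / 143327232 > 0 := by
  have hy : 0 ≤ 524288 * k - 14175 := by linarith
  rw [rpow_three_halves_eq_sqrt_pow hy]
  set a := √(2 * k)
  set b := √(524288 * k - 14175)
  have ha : 0 < a := sqrt_pos.mpr (by linarith)
  have ha2 : a ^ 2 = 2 * k := sq_sqrt (by linarith)
  have hb2 : b ^ 2 = 524288 * k - 14175 := sq_sqrt hy
  have hne : b ≠ 288 * a := by
    intro h
    have : b ^ 2 = 82944 * a ^ 2 := by rw [h]; ring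
    linarith
  have amgm := three_mul_sq_mul_lt_pow_three_add (sqrt_nonneg _) (by positivity : 0 < 288 * a) hne
  rw [show k = a ^ 2 / 2 by linarith]
  linarith

theorem hybrid_dominates_DA_two_early_offers
    (k : ℝ) (hk : 1575/32768 < k) (hk' : k < 1764/32768) :
    (2*k * Real.sqrt (2*k)) / 3 - (k * Real.sqrt (524288*k - 14175)) / 288
      + (524288*k - 14175) ^ ((3:ℝ)/2) / 143327232 > 0 :=
  hybrid_dominates_DA_two_early_offers_general k hk
end

section
/- For every real number k with 1575/32768 < k < 1764/32768, (k·√(524288k − 14175))/288 − ((524288k − 14175)^(3/2))/143327232 − (2k·√(2k))/3 + k/16 − 1/196608 > 0. (This is the strict welfare dominance of the DA over the DoSV conditional on the offer arrival order 2-then-1, from the proof of the lemma on welfare comparisons; it shows the DoSV does not always dominate the DA.) -/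
/-!
With `A = 524288 k - 14175` we have `A ^ (3/2) = A √A`, so the two `√A` terms merge into
`(14175 - 26624 k) √A / 143327232`, whose coefficient is positive on the interval. The endpoints
of the interval give `√A > 105` and `√(2k) < 21/64` (note `A = 105²` at `k = 1575/32768` and
`2k = (21/64)²` at `k = 1764/32768`); substituting these bounds leaves an affine function of `k`
that is still positive on the whole interval.
-/

open Real

lemma Real.rpow_three_halves {x : ℝ} (hx : 0 ≤ x) : x ^ ((3 : ℝ) / 2) = x * √x := by
  rw [show (3 : ℝ) / 2 = 1 + 1 / 2 by norm_num, rpow_add' hx (by norm_num), rpow_one,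
    sqrt_eq_rpow]

lemma hundred_five_lt_sqrt {k : ℝ} (hk : 1575 / 32768 < k) : 105 < √(524288 * k - 14175) :=
  lt_sqrt_of_sq_lt (by linarith)

lemma sqrt_two_mul_lt {k : ℝ} (hk : k < 1764 / 32768) : √(2 * k) < 21 / 64 :=
  (sqrt_lt' (by norm_num)).2 (by linarith)

theorem DA_dominates_DoSV_offers_2_then_1
    (k : ℝ) (hk : 1575/32768 < k) (hk' : k < 1764/32768) :
    (k * Real.sqrt (524288*k - 14175)) / 288
      - (524288*k - 14175) ^ ((3:ℝ)/2) / 143327232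
      - (2*k * Real.sqrt (2*k)) / 3 + k/16 - 1/196608 > 0 := by
  rw [rpow_three_halves (by linarith)]
  have hs := hundred_five_lt_sqrt hk
  have ht := sqrt_two_mul_lt hk'
  have hc : 0 < 14175 - 26624 * k := by linarith
  nlinarith [mul_lt_mul_of_pos_left hs hc,
    mul_le_mul_of_nonneg_left ht.le (by linarith : (0 : ℝ) ≤ k)]
end
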